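/- arXiv:1908.05097 — 7 statements merged into one kernel-verified Lean document; each statement's English description precedes it below -/
import Mathlib

section
/- If Y_1, ..., Y_p are independent real-valued regularly varying random variables with comparable tails, then P(Y_1 + ... + Y_p > x, max(Y_1, ..., Y_p) ≤ x) = o(P(Y_1 + ... + Y_p > x)) as x → ∞. -/
open MeasureTheory ProbabilityTheory Filter Topology

/-- `f ~ g` at infinity: the ratio tends to 1. -/
def Asymp (f g : ℝ → ℝ) : Prop := Tendsto (fun x => f x / g x) atTop (𝓝 1)

/-- A slowly varying function: eventually positive and `ℓ(cx)/ℓ(x) → 1` for all `c > 0`. -/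
def SlowlyVarying (ℓ : ℝ → ℝ) : Prop :=
  (∀ᶠ x in atTop, 0 < ℓ x) ∧ ∀ c > 0, Tendsto (fun x => ℓ (c * x) / ℓ x) atTop (𝓝 1)

/-- The (real-valued) upper tail probability function of `Y` under `μ`. -/
noncomputable def tailP {Ω : Type*} [MeasurableSpace Ω] (μ : Measure Ω) (Y : Ω → ℝ) (x : ℝ) : ℝ :=
  (μ {ω | x < Y ω}).toReal

/-!
Write `L x = ℓ x * x ^ (-α)`, `Tᵢ = P(Yᵢ > ·)` and `S = ∑ Yᵢ`, and fix a small `δ > 0`. If `S > x`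
while every `Yᵢ ≤ x`, then either two of the `Yᵢ` exceed `δ x / p`, or one of them lies in
`((1 - δ) x, x]`: otherwise the largest is at most `(1 - δ) x` and the remaining `p - 1` are at
most `δ x / p` each, so `S < x`. By independence the first event has probability at most
`∑ Tᵢ(δx/p) Tⱼ(δx/p) = o(L x)`, each factor being `O(L x)` and tending to `0`; by regular
variation the second has probability at most `∼ ∑ cᵢ ((1 - δ) ^ (-α) - 1) L x`, which is small
with `δ`. Hence `P(S > x, max Yᵢ ≤ x) = o(L x)`. Conversely
`P(S > x) ≥ P(Y₀ > 2x) ∏_{i ≠ 0} P(Yᵢ > -x/p) ∼ c₀ 2 ^ (-α) L x`, so `L = O(P(S > ·))`.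
-/

open Asymptotics Finset

section Tail

variable {Ω : Type*} [MeasurableSpace Ω] {μ : Measure Ω} {Y : Ω → ℝ}

lemma tailP_nonneg {x : ℝ} : 0 ≤ tailP μ Y x := ENNReal.toReal_nonneg

lemma tendsto_tailP_atTop [IsFiniteMeasure μ] (hY : Measurable Y) :
    Tendsto (tailP μ Y) atTop (𝓝 0) := by
  have h := tendsto_measure_iInter_atTop (μ := μ) (s := fun x : ℝ => {ω | x < Y ω})
    (fun _ => (measurableSet_lt measurable_const hY).nullMeasurableSet)
    (fun _ _ hxy _ hω => hxy.trans_lt hω) ⟨0, measure_ne_top μ _⟩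
  have hempty : ⋂ x : ℝ, {ω | x < Y ω} = ∅ :=
    Set.eq_empty_of_forall_notMem fun ω hω => lt_irrefl (Y ω) (Set.mem_iInter.1 hω (Y ω))
  rw [hempty, measure_empty] at h
  have h0 := (ENNReal.tendsto_toReal ENNReal.zero_ne_top).comp h
  rwa [ENNReal.toReal_zero] at h0

lemma tendsto_tailP_atBot [IsProbabilityMeasure μ] : Tendsto (tailP μ Y) atBot (𝓝 1) := by
  have h := tendsto_measure_iUnion_atBot (μ := μ) (s := fun x : ℝ => {ω | x < Y ω})
    (fun _ _ hxy _ hω => hxy.trans_lt hω)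
  have huniv : ⋃ x : ℝ, {ω | x < Y ω} = Set.univ :=
    Set.eq_univ_of_forall fun ω => Set.mem_iUnion.2 ⟨Y ω - 1, by simp⟩
  rw [huniv, measure_univ] at h
  have h1 := (ENNReal.tendsto_toReal ENNReal.one_ne_top).comp h
  rwa [ENNReal.toReal_one] at h1

end Tail

lemma Asymptotics.isLittleO_of_eventually_le_of_tendsto_div {α ι : Type*} {l : Filter α}
    {l' : Filter ι} [l'.NeBot] {f g : α → ℝ} {F : ι → α → ℝ} {b : ι → ℝ}
    (hf : ∀ᶠ x in l, 0 ≤ f x) (hg : ∀ᶠ x in l, 0 < g x) (hb : Tendsto b l' (𝓝 0))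
    (hF : ∀ᶠ δ in l', Tendsto (fun x => F δ x / g x) l (𝓝 (b δ)) ∧ ∀ᶠ x in l, f x ≤ F δ x) :
    f =o[l] g := by
  refine IsLittleO.of_bound fun ε hε => ?_
  obtain ⟨δ, hbδ, hlim, hle⟩ := ((hb.eventually (gt_mem_nhds hε)).and hF).exists
  filter_upwards [hlim.eventually (gt_mem_nhds hbδ), hle, hf, hg] with x hx hfF hf0 hg0
  rw [Real.norm_of_nonneg hf0, Real.norm_of_nonneg hg0.le]
  exact hfF.trans ((div_lt_iff₀ hg0).1 hx).le

section RegularVariation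

variable {ℓ : ℝ → ℝ} {α : ℝ}

lemma SlowlyVarying.eventually_pos_mul_rpow (hℓ : SlowlyVarying ℓ) (α : ℝ) :
    ∀ᶠ x in atTop, 0 < ℓ x * x ^ (-α) := by
  filter_upwards [hℓ.1, eventually_gt_atTop 0] with x hℓx hx
  exact mul_pos hℓx (Real.rpow_pos_of_pos hx _)

lemma SlowlyVarying.tendsto_comp_mul_div (hℓ : SlowlyVarying ℓ) (α : ℝ) {k : ℝ} (hk : 0 < k) :
    Tendsto (fun x => ℓ (k * x) * (k * x) ^ (-α) / (ℓ x * x ^ (-α))) atTop (𝓝 (k ^ (-α))) := by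
  refine ((hℓ.2 k hk).mul_const (k ^ (-α))).congr' ?_ |>.trans (by rw [one_mul])
  filter_upwards [hℓ.1, eventually_gt_atTop 0] with x hℓx hx
  rw [Real.mul_rpow hk.le hx.le]
  field_simp [(Real.rpow_pos_of_pos hx (-α)).ne']

lemma Asymp.tendsto_comp_mul_div {T : ℝ → ℝ} {c k : ℝ} (hℓ : SlowlyVarying ℓ) (hc : c ≠ 0)
    (hk : 0 < k) (hT : Asymp T fun x => c * ℓ x * x ^ (-α)) :
    Tendsto (fun x => T (k * x) / (ℓ x * x ^ (-α))) atTop (𝓝 (c * k ^ (-α))) := by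
  have hkx : Tendsto (fun x : ℝ => k * x) atTop atTop := tendsto_id.const_mul_atTop hk
  have h := ((hT.comp hkx).const_mul c).mul (hℓ.tendsto_comp_mul_div α hk)
  rw [mul_one] at h
  refine h.congr' ?_
  filter_upwards [hkx.eventually (hℓ.eventually_pos_mul_rpow α),
    hℓ.eventually_pos_mul_rpow α] with x hkx hx
  simp only [Function.comp_apply, mul_assoc c]
  generalize ℓ (k * x) * (k * x) ^ (-α) = a at hkx ⊢
  field_simp

end RegularVariation

section FiniteSums

variable {ι : Type*} [Fintype ι] {y : ι → ℝ} {x : ℝ}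

lemma cast_card_univ_erase [DecidableEq ι] (i : ι) :
    ((univ.erase i).card : ℝ) = Fintype.card ι - 1 := by
  rw [← Finset.card_univ, eq_sub_iff_add_eq]
  exact_mod_cast card_erase_add_one (mem_univ i)

lemma exists_pair_gt_or_exists_gt [Nonempty ι] {δ : ℝ} (hx : 0 < x) (hδ : 0 < δ)
    (hsum : x < ∑ i, y i) :
    (∃ i j, i ≠ j ∧ δ / Fintype.card ι * x < y i ∧ δ / Fintype.card ι * x < y j) ∨
      ∃ i, (1 - δ) * x < y i := by
  classical
  by_contra! h
  obtain ⟨hpair, hmax⟩ := h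
  set n : ℝ := (Fintype.card ι : ℝ)
  have hn : 0 < n := Nat.cast_pos.2 Fintype.card_pos
  obtain ⟨i₀, -, hi₀⟩ := exists_max_image univ y univ_nonempty
  have hrest : ∀ j ∈ univ.erase i₀, y j ≤ δ / n * x := fun j hj => by
    by_contra! hj'
    exact (hpair i₀ j (ne_of_mem_erase hj).symm (hj'.trans_le (hi₀ j (mem_univ j)))).not_gt hj'
  have hrest_sum : ∑ j ∈ univ.erase i₀, y j ≤ (n - 1) * (δ / n * x) := by
    have h := sum_le_card_nsmul _ _ _ hrest
    rwa [nsmul_eq_mul, cast_card_univ_erase] at h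
  have hsum_le : ∑ i, y i ≤ x - δ / n * x := by
    rw [← add_sum_erase _ _ (mem_univ i₀)]
    have hsplit : (n - 1) * (δ / n * x) = δ * x - δ / n * x := by field_simp
    linarith [hmax i₀]
  have hpos : 0 < δ / n * x := by positivity
  linarith

lemma lt_sum_of_two_mul_lt_of_forall_ne_neg_lt {i₀ : ι} (hx : 0 ≤ x) (hi₀ : 2 * x < y i₀)
    (hrest : ∀ i ≠ i₀, -(x / Fintype.card ι) < y i) : x < ∑ i, y i := by
  classical
  set n : ℝ := (Fintype.card ι : ℝ)
  have hn : 1 ≤ n := Nat.one_le_cast.2 (Fintype.card_pos_iff.2 ⟨i₀⟩)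
  have hrest_sum : (n - 1) * -(x / n) ≤ ∑ i ∈ univ.erase i₀, y i := by
    have h := card_nsmul_le_sum (univ.erase i₀) y _ fun i hi => (hrest i (ne_of_mem_erase hi)).le
    rwa [nsmul_eq_mul, cast_card_univ_erase] at h
  have hsplit : (n - 1) * -(x / n) = x / n - x := by field_simp; ring
  have hnonneg : 0 ≤ x / n := by positivity
  rw [← add_sum_erase _ _ (mem_univ i₀)]
  linarith

end FiniteSums

section Bounds

variable {Ω ι : Type*} [MeasurableSpace Ω] {μ : Measure Ω} [IsFiniteMeasure μ] [Fintype ι]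
  {Y : ι → Ω → ℝ} {x : ℝ}

lemma tailP_mul_prod_erase_le_tailP_sum [DecidableEq ι] (hindep : iIndepFun Y μ) (i₀ : ι)
    (hx : 0 ≤ x) :
    tailP μ (Y i₀) (2 * x) * ∏ i ∈ univ.erase i₀, tailP μ (Y i) (-(x / Fintype.card ι)) ≤
      tailP μ (fun ω => ∑ i, Y i ω) x := by
  set a : ι → ℝ := fun i => if i = i₀ then 2 * x else -(x / Fintype.card ι)
  have hprod :
      tailP μ (Y i₀) (2 * x) * ∏ i ∈ univ.erase i₀, tailP μ (Y i) (-(x / Fintype.card ι)) =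
        μ.real (⋂ i, Y i ⁻¹' Set.Ioi (a i)) := by
    rw [measureReal_def, hindep.meas_iInter fun i => ⟨_, measurableSet_Ioi, rfl⟩,
      ENNReal.toReal_prod, ← mul_prod_erase _ _ (mem_univ i₀)]
    refine congrArg₂ _ (by simp only [a, if_pos rfl]; rfl) (prod_congr rfl fun i hi => ?_)
    simp only [a, if_neg (ne_of_mem_erase hi)]
    rfl
  rw [hprod]
  refine measureReal_mono fun ω hω => ?_
  simp only [Set.mem_iInter, Set.mem_preimage, Set.mem_Ioi] at hω
  exact lt_sum_of_two_mul_lt_of_forall_ne_neg_lt hx (by simpa [a] using hω i₀)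
    fun i hi => by simpa [a, hi] using hω i

lemma measureReal_sum_gt_forall_le_le [Nonempty ι] (hmeas : ∀ i, Measurable (Y i))
    (hindep : iIndepFun Y μ) {δ : ℝ} (hx : 0 < x) (hδ : 0 < δ) :
    μ.real {ω | x < ∑ i, Y i ω ∧ ∀ i, Y i ω ≤ x} ≤
      ∑ q ∈ univ.offDiag,
          tailP μ (Y q.1) (δ / Fintype.card ι * x) * tailP μ (Y q.2) (δ / Fintype.card ι * x) +
        ∑ i, (tailP μ (Y i) ((1 - δ) * x) - tailP μ (Y i) x) := by
  set t := δ / Fintype.card ι * x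
  have hsub : {ω | x < ∑ i, Y i ω ∧ ∀ i, Y i ω ≤ x} ⊆
      (⋃ q ∈ univ.offDiag, {ω | t < Y q.1 ω} ∩ {ω | t < Y q.2 ω}) ∪
        ⋃ i ∈ univ, {ω | (1 - δ) * x < Y i ω} \ {ω | x < Y i ω} := by
    rintro ω ⟨hsum, hle⟩
    rcases exists_pair_gt_or_exists_gt hx hδ hsum with ⟨i, j, hij, hi, hj⟩ | ⟨i, hi⟩
    · exact Or.inl <| Set.mem_biUnion (x := (i, j))
        (mem_offDiag.2 ⟨mem_univ i, mem_univ j, hij⟩) ⟨hi, hj⟩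
    · exact Or.inr (Set.mem_biUnion (mem_univ i) ⟨hi, (hle i).not_gt⟩)
  have hpair : ∀ q ∈ univ.offDiag,
      μ.real ({ω | t < Y q.1 ω} ∩ {ω | t < Y q.2 ω}) = tailP μ (Y q.1) t * tailP μ (Y q.2) t := by
    intro q hq
    change (μ (Y q.1 ⁻¹' Set.Ioi t ∩ Y q.2 ⁻¹' Set.Ioi t)).toReal = _
    rw [(hindep.indepFun (mem_offDiag.1 hq).2.2).measure_inter_preimage_eq_mul
      _ _ measurableSet_Ioi measurableSet_Ioi, ENNReal.toReal_mul]
    rfl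
  have hshell : ∀ i ∈ univ, μ.real ({ω | (1 - δ) * x < Y i ω} \ {ω | x < Y i ω}) =
      tailP μ (Y i) ((1 - δ) * x) - tailP μ (Y i) x := fun i _ =>
    measureReal_sdiff (fun ω (hω : x < Y i ω) => show (1 - δ) * x < Y i ω by nlinarith)
      (measurableSet_lt measurable_const (hmeas i))
  calc μ.real {ω | x < ∑ i, Y i ω ∧ ∀ i, Y i ω ≤ x}
      ≤ μ.real (⋃ q ∈ univ.offDiag, {ω | t < Y q.1 ω} ∩ {ω | t < Y q.2 ω}) +
          μ.real (⋃ i ∈ univ, {ω | (1 - δ) * x < Y i ω} \ {ω | x < Y i ω}) :=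
        (measureReal_mono hsub).trans (measureReal_union_le _ _)
    _ ≤ _ := by
      grw [measureReal_biUnion_finset_le, measureReal_biUnion_finset_le, sum_congr rfl hpair,
        sum_congr rfl hshell]

end Bounds

section TailRatios

variable {ι : Type*} {ℓ : ℝ → ℝ} {α : ℝ} {T : ι → ℝ → ℝ} {c : ι → ℝ}

lemma tendsto_sum_mul_comp_mul_div (hℓ : SlowlyVarying ℓ) (hc : ∀ i, c i ≠ 0)
    (hT : ∀ i, Asymp (T i) fun x => c i * ℓ x * x ^ (-α))
    (hT₀ : ∀ i, Tendsto (T i) atTop (𝓝 0)) (s : Finset (ι × ι)) {β : ℝ} (hβ : 0 < β) :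
    Tendsto (fun x => (∑ q ∈ s, T q.1 (β * x) * T q.2 (β * x)) / (ℓ x * x ^ (-α)))
      atTop (𝓝 0) := by
  simp_rw [sum_div]
  rw [← sum_const_zero (s := s)]
  refine tendsto_finsetSum s fun q _ => ?_
  have h := ((hT q.1).tendsto_comp_mul_div hℓ (hc q.1) hβ).mul
    ((hT₀ q.2).comp (tendsto_id.const_mul_atTop hβ))
  rw [mul_zero] at h
  exact h.congr fun x => by simp only [Function.comp_apply, id]; ring

lemma tendsto_sum_sub_comp_mul_div (hℓ : SlowlyVarying ℓ) (hc : ∀ i, c i ≠ 0)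
    (hT : ∀ i, Asymp (T i) fun x => c i * ℓ x * x ^ (-α)) (s : Finset ι) {k : ℝ} (hk : 0 < k) :
    Tendsto (fun x => (∑ i ∈ s, (T i (k * x) - T i x)) / (ℓ x * x ^ (-α)))
      atTop (𝓝 (∑ i ∈ s, c i * (k ^ (-α) - 1))) := by
  simp_rw [sum_div]
  refine tendsto_finsetSum s fun i _ => ?_
  have h := ((hT i).tendsto_comp_mul_div hℓ (hc i) hk).sub
    ((hT i).tendsto_comp_mul_div hℓ (hc i) one_pos)
  simp only [one_mul, Real.one_rpow, mul_one, ← sub_div] at h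
  simpa only [mul_sub, mul_one] using h

end TailRatios

section RegularlyVaryingSums

variable {Ω ι : Type*} [MeasurableSpace Ω] {μ : Measure Ω} [Fintype ι] {Y : ι → Ω → ℝ}
  {ℓ : ℝ → ℝ} {α : ℝ}

lemma isBigO_tailP_sum [IsProbabilityMeasure μ] (hindep : iIndepFun Y μ) (hℓ : SlowlyVarying ℓ)
    (i₀ : ι) {c : ℝ} (hc : c ≠ 0) (htail : Asymp (tailP μ (Y i₀)) fun x => c * ℓ x * x ^ (-α)) :
    (fun x => ℓ x * x ^ (-α)) =O[atTop] tailP μ (fun ω => ∑ i, Y i ω) := by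
  classical
  set n : ℝ := (Fintype.card ι : ℝ)
  have hn : 0 < n := Nat.cast_pos.2 (Fintype.card_pos_iff.2 ⟨i₀⟩)
  set G : ℝ → ℝ := fun x =>
    tailP μ (Y i₀) (2 * x) * ∏ i ∈ univ.erase i₀, tailP μ (Y i) (-(x / n))
  have hprod : Tendsto (fun x => ∏ i ∈ univ.erase i₀, tailP μ (Y i) (-(x / n))) atTop (𝓝 1) := by
    rw [← prod_const_one (s := univ.erase i₀)]
    exact tendsto_finsetProd _ fun i _ =>
      tendsto_tailP_atBot.comp (tendsto_neg_atTop_atBot.comp (tendsto_id.atTop_div_const hn))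
  have hG : Tendsto (fun x => G x / (ℓ x * x ^ (-α))) atTop (𝓝 (c * 2 ^ (-α) * 1)) :=
    ((htail.tendsto_comp_mul_div hℓ hc two_pos).mul hprod).congr fun x => by
      simp only [G]; ring
  have hLG := isBigO_of_div_tendsto_nhds_of_ne_zero hG
    (by simp [hc, (Real.rpow_pos_of_pos two_pos (-α)).ne'])
  refine hLG.trans (IsBigO.of_bound' (eventually_ge_atTop 0 |>.mono fun x hx => ?_))
  have hG₀ : 0 ≤ G x := mul_nonneg tailP_nonneg (prod_nonneg fun _ _ => tailP_nonneg)
  rw [Real.norm_of_nonneg hG₀, Real.norm_of_nonneg tailP_nonneg]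
  exact tailP_mul_prod_erase_le_tailP_sum hindep i₀ hx

lemma isLittleO_measureReal_sum_gt_forall_le [IsFiniteMeasure μ] [Nonempty ι]
    (hmeas : ∀ i, Measurable (Y i)) (hindep : iIndepFun Y μ) (hℓ : SlowlyVarying ℓ) {c : ι → ℝ}
    (hc : ∀ i, c i ≠ 0) (htail : ∀ i, Asymp (tailP μ (Y i)) fun x => c i * ℓ x * x ^ (-α)) :
    (fun x => μ.real {ω | x < ∑ i, Y i ω ∧ ∀ i, Y i ω ≤ x}) =o[atTop]
      fun x => ℓ x * x ^ (-α) := by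
  have hn : (0 : ℝ) < Fintype.card ι := Nat.cast_pos.2 Fintype.card_pos
  have hb : Tendsto (fun δ : ℝ => ∑ i, c i * ((1 - δ) ^ (-α) - 1)) (𝓝[>] 0) (𝓝 0) := by
    have hcont : ContinuousAt (fun δ : ℝ => ∑ i, c i * ((1 - δ) ^ (-α) - 1)) 0 := by
      fun_prop (disch := norm_num)
    simpa using hcont.tendsto.mono_left nhdsWithin_le_nhds
  refine isLittleO_of_eventually_le_of_tendsto_div
    (F := fun δ x => ∑ q ∈ univ.offDiag, tailP μ (Y q.1) (δ / Fintype.card ι * x) *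
        tailP μ (Y q.2) (δ / Fintype.card ι * x) +
      ∑ i, (tailP μ (Y i) ((1 - δ) * x) - tailP μ (Y i) x))
    (Eventually.of_forall fun _ => measureReal_nonneg) (hℓ.eventually_pos_mul_rpow α) hb ?_
  filter_upwards [Ioo_mem_nhdsGT one_pos] with δ ⟨hδ₀, hδ₁⟩
  refine ⟨?_, (eventually_gt_atTop 0).mono fun x hx =>
    measureReal_sum_gt_forall_le_le hmeas hindep hx hδ₀⟩
  simp_rw [add_div]
  have hpairs := tendsto_sum_mul_comp_mul_div hℓ hc htail
    (fun i => tendsto_tailP_atTop (hmeas i)) univ.offDiag (div_pos hδ₀ hn)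
  simpa using hpairs.add (tendsto_sum_sub_comp_mul_div hℓ hc htail univ (sub_pos.2 hδ₁))

end RegularlyVaryingSums

theorem sum_large_max_small_negligible_general
    {Ω : Type*} [MeasurableSpace Ω] (μ : Measure Ω) [IsProbabilityMeasure μ]
    (p : ℕ) [NeZero p] (Y : Fin p → Ω → ℝ) (hmeas : ∀ j, Measurable (Y j))
    (hindep : iIndepFun Y μ)
    (α : ℝ) (ℓ : ℝ → ℝ) (hℓ : SlowlyVarying ℓ)
    (c : Fin p → ℝ) (hc : ∀ j, 0 < c j)
    (htail : ∀ j, Asymp (tailP μ (Y j)) (fun x => c j * ℓ x * x ^ (-α))) :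
    Tendsto
      (fun x => (μ {ω | x < ∑ h, Y h ω ∧
          Finset.univ.sup' Finset.univ_nonempty (fun j => Y j ω) ≤ x}).toReal /
        tailP μ (fun ω => ∑ h, Y h ω) x)
      atTop (𝓝 0) := by
  have hc' : ∀ j, c j ≠ 0 := fun j => (hc j).ne'
  have hsmall := isLittleO_measureReal_sum_gt_forall_le hmeas hindep hℓ hc' htail
  have hlarge := isBigO_tailP_sum hindep hℓ 0 (hc' 0) (htail 0)
  simpa only [Finset.sup'_le_iff, mem_univ, true_implies, measureReal_def] using
    (hsmall.trans_isBigO hlarge).tendsto_div_nhds_zero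

theorem sum_large_max_small_negligible
    {Ω : Type*} [MeasurableSpace Ω] (μ : Measure Ω) [IsProbabilityMeasure μ]
    (p : ℕ) [NeZero p] (Y : Fin p → Ω → ℝ) (hmeas : ∀ j, Measurable (Y j))
    (hindep : iIndepFun Y μ)
    (α : ℝ) (hα : 0 < α) (ℓ : ℝ → ℝ) (hℓ : SlowlyVarying ℓ)
    (c : Fin p → ℝ) (hc : ∀ j, 0 < c j)
    (htail : ∀ j, Asymp (tailP μ (Y j)) (fun x => c j * ℓ x * x ^ (-α))) :
    Tendsto
      (fun x => (μ {ω | x < ∑ h, Y h ω ∧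
          Finset.univ.sup' Finset.univ_nonempty (fun j => Y j ω) ≤ x}).toReal /
        tailP μ (fun ω => ∑ h, Y h ω) x)
      atTop (𝓝 0) :=
  sum_large_max_small_negligible_general μ p Y hmeas hindep α ℓ hℓ c hc htail
end

section
/- In a heavy-tailed linear SCM, if X_1 causes X_2 (i.e., node 1 is an ancestor of node 2 in the DAG), then Γ_{12} = 1 and Γ_{21} ∈ (1/2, 1). -/
open Filter Topology

theorem cause_implies_gamma_values
    {V : Type*} [Fintype V] [DecidableEq V]
    -- the ancestor sets of the DAG (`An j` contains `j` itself)
    (An : V → Finset V) (hAself : ∀ j, j ∈ An j)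
    (hATrans : ∀ j, ∀ h ∈ An j, An h ⊆ An j)
    (hAAcyclic : ∀ j h, h ∈ An j → j ∈ An h → h = j)
    -- the path coefficients of the SCM
    (B : V → V → ℝ) (hBpos : ∀ j, ∀ h ∈ An j, 0 < B h j) (hBself : ∀ j, B j j = 1)
    (α : ℝ) (hα : 0 < α)
    -- the matrix of causal tail coefficients, via its closed form
    (Γ : V → V → ℝ)
    (hΓ : ∀ j k, j ≠ k →
      Γ j k = 1 / 2 + 1 / 2 * (∑ h ∈ An j ∩ An k, B h j ^ α) / (∑ h ∈ An j, B h j ^ α))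
    -- the two nodes of interest
    (a b : V) (hab : a ≠ b)
    --  causes 
    (hcause : a ∈ An b) :
    Γ a b = 1 ∧ Γ b a ∈ Set.Ioo (1 / 2 : ℝ) 1 := by
  have hsub : An a ⊆ An b := hATrans b a hcause
  have hbnota : b ∉ An a := fun hb => hab (hAAcyclic a b hb hcause).symm
  -- positivity of sums
  have hS1pos : 0 < ∑ h ∈ An a, B h a ^ α := by
    apply Finset.sum_pos
    · intro h hh
      exact Real.rpow_pos_of_pos (hBpos a h hh) α
    · exact ⟨a, hAself a⟩
  have hNpos : 0 < ∑ h ∈ An a, B h b ^ α := by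
    apply Finset.sum_pos
    · intro h hh
      exact Real.rpow_pos_of_pos (hBpos b h (hsub hh)) α
    · exact ⟨a, hAself a⟩
  have hND : (∑ h ∈ An a, B h b ^ α) < ∑ h ∈ An b, B h b ^ α := by
    apply Finset.sum_lt_sum_of_subset hsub (i := b) (hAself b) hbnota
    · exact Real.rpow_pos_of_pos (by rw [hBself]; norm_num) α
    · intro i hi _
      exact (Real.rpow_pos_of_pos (hBpos b i hi) α).le
  have hDpos : 0 < ∑ h ∈ An b, B h b ^ α := lt_trans hNpos hND
  constructor
  · rw [hΓ a b hab, Finset.inter_eq_left.mpr hsub]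
    field_simp
    ring
  · rw [hΓ b a hab.symm, Finset.inter_eq_right.mpr hsub]
    constructor
    · have : 0 < 1 / 2 * (∑ h ∈ An a, B h b ^ α) / (∑ h ∈ An b, B h b ^ α) :=
        div_pos (by linarith) hDpos
      linarith
    · have h1 : (∑ h ∈ An a, B h b ^ α) / (∑ h ∈ An b, B h b ^ α) < 1 :=
        (div_lt_one hDpos).mpr hND
      have h2 : 1 / 2 * (∑ h ∈ An a, B h b ^ α) / (∑ h ∈ An b, B h b ^ α) < 1 / 2 := by
        rw [mul_div_assoc]
        linarith
      linarith
end

section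
/- In a heavy-tailed linear SCM, Γ_{12} = Γ_{21} = 1/2 if and only if there is no causal link between X_1 and X_2, i.e., An(1) ∩ An(2) = ∅. -/
open Filter Topology

theorem no_causal_link_iff_gamma_half
    {V : Type*} [Fintype V] [DecidableEq V]
    -- the ancestor sets of the DAG (`An j` contains `j` itself)
    (An : V → Finset V) (hAself : ∀ j, j ∈ An j)
    (hATrans : ∀ j, ∀ h ∈ An j, An h ⊆ An j)
    (hAAcyclic : ∀ j h, h ∈ An j → j ∈ An h → h = j)
    -- the path coefficients of the SCM
    (B : V → V → ℝ) (hBpos : ∀ j, ∀ h ∈ An j, 0 < B h j) (hBself : ∀ j, B j j = 1)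
    (α : ℝ) (hα : 0 < α)
    -- the matrix of causal tail coefficients, via its closed form
    (Γ : V → V → ℝ)
    (hΓ : ∀ j k, j ≠ k →
      Γ j k = 1 / 2 + 1 / 2 * (∑ h ∈ An j ∩ An k, B h j ^ α) / (∑ h ∈ An j, B h j ^ α))
    -- the two nodes of interest
    (a b : V) (hab : a ≠ b) :
    (Γ a b = 1 / 2 ∧ Γ b a = 1 / 2) ↔ An a ∩ An b = ∅ := by
  have hden : ∀ j : V, 0 < ∑ h ∈ An j, B h j ^ α := fun j =>
    Finset.sum_pos (fun h hh => Real.rpow_pos_of_pos (hBpos j h hh) α) ⟨j, hAself j⟩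
  have key : ∀ j k : V, j ≠ k →
      (Γ j k = 1 / 2 ↔ An j ∩ An k = ∅) := by
    intro j k hjk
    rw [hΓ j k hjk]
    constructor
    · intro h
      have hnum : (∑ h ∈ An j ∩ An k, B h j ^ α) = 0 := by
        have := hden j
        field_simp at h
        linarith [h]
      by_contra hne
      obtain ⟨x, hx⟩ := Finset.nonempty_iff_ne_empty.2 hne
      have hxj : x ∈ An j := (Finset.mem_inter.1 hx).1
      have hpos : 0 < ∑ h ∈ An j ∩ An k, B h j ^ α :=
        Finset.sum_pos (fun h hh => Real.rpow_pos_of_pos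
          (hBpos j h (Finset.mem_inter.1 hh).1) α) ⟨x, hx⟩
      linarith
    · intro h
      rw [h]
      simp
  rw [key a b hab, key b a hab.symm, Finset.inter_comm (An b) (An a)]
  tauto
end

section
/- In a heavy-tailed linear SCM, Γ_{12} ∈ (1/2, 1) and Γ_{21} ∈ (1/2, 1) if and only if there exists a node j ∉ {1,2} that is a common cause of X_1 and X_2 while neither X_1 causes X_2 nor X_2 causes X_1. -/
open Filter Topology

theorem common_cause_iff_gamma_strictly_between
    {V : Type*} [Fintype V] [DecidableEq V]
    -- the ancestor sets of the DAG (`An j` contains `j` itself)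
    (An : V → Finset V) (hAself : ∀ j, j ∈ An j)
    (hATrans : ∀ j, ∀ h ∈ An j, An h ⊆ An j)
    (hAAcyclic : ∀ j h, h ∈ An j → j ∈ An h → h = j)
    -- the path coefficients of the SCM
    (B : V → V → ℝ) (hBpos : ∀ j, ∀ h ∈ An j, 0 < B h j) (hBself : ∀ j, B j j = 1)
    (α : ℝ) (hα : 0 < α)
    -- the matrix of causal tail coefficients, via its closed form
    (Γ : V → V → ℝ)
    (hΓ : ∀ j k, j ≠ k →
      Γ j k = 1 / 2 + 1 / 2 * (∑ h ∈ An j ∩ An k, B h j ^ α) / (∑ h ∈ An j, B h j ^ α))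
    -- the two nodes of interest
    (a b : V) (hab : a ≠ b) :
    (Γ a b ∈ Set.Ioo (1 / 2 : ℝ) 1 ∧ Γ b a ∈ Set.Ioo (1 / 2 : ℝ) 1) ↔
      ((∃ j, j ≠ a ∧ j ≠ b ∧ j ∈ An a ∧ j ∈ An b) ∧ a ∉ An b ∧ b ∉ An a) := by
  have key : ∀ x y : V, x ≠ y →
      (Γ x y ∈ Set.Ioo (1 / 2 : ℝ) 1 ↔ ((An x ∩ An y).Nonempty ∧ x ∉ An y)) := by
    intro x y hxy
    have hSx : 0 < ∑ h ∈ An x, B h x ^ α :=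
      Finset.sum_pos (fun h hh => Real.rpow_pos_of_pos (hBpos x h hh) α) ⟨x, hAself x⟩
    have hsub : An x ∩ An y ⊆ An x := Finset.inter_subset_left
    have hle : ∑ h ∈ An x ∩ An y, B h x ^ α ≤ ∑ h ∈ An x, B h x ^ α :=
      Finset.sum_le_sum_of_subset_of_nonneg hsub
        (fun h hh _ => (Real.rpow_pos_of_pos (hBpos x h hh) α).le)
    rw [hΓ x y hxy, mul_div_assoc]
    constructor
    · rintro ⟨h1, h2⟩
      constructor
      · by_contra hne
        rw [Finset.not_nonempty_iff_eq_empty] at hne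
        rw [hne] at h1
        simp at h1
      · intro hxy'
        have hsub2 : An x ⊆ An x ∩ An y :=
          Finset.subset_inter (le_refl _) (hATrans y x hxy')
        have heq : ∑ h ∈ An x ∩ An y, B h x ^ α = ∑ h ∈ An x, B h x ^ α :=
          le_antisymm hle (Finset.sum_le_sum_of_subset_of_nonneg hsub2
            (fun h hh _ => (Real.rpow_pos_of_pos (hBpos x h (hsub hh)) α).le))
        rw [heq] at h2
        rw [div_self hSx.ne'] at h2
        norm_num at h2
    · rintro ⟨⟨j, hj⟩, hnx⟩
      have hjx := (Finset.mem_inter.mp hj).1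
      have hpos : 0 < ∑ h ∈ An x ∩ An y, B h x ^ α :=
        Finset.sum_pos (fun h hh => Real.rpow_pos_of_pos (hBpos x h (hsub hh)) α) ⟨j, hj⟩
      have hlt : ∑ h ∈ An x ∩ An y, B h x ^ α < ∑ h ∈ An x, B h x ^ α := by
        apply Finset.sum_lt_sum_of_subset hsub (i := x) (hAself x)
        · simp [hnx]
        · exact Real.rpow_pos_of_pos (hBpos x x (hAself x)) α
        · exact fun h hh _ => (Real.rpow_pos_of_pos (hBpos x h hh) α).le
      constructor
      · have : 0 < (∑ h ∈ An x ∩ An y, B h x ^ α) / (∑ h ∈ An x, B h x ^ α) :=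
          div_pos hpos hSx
        linarith
      · have : (∑ h ∈ An x ∩ An y, B h x ^ α) / (∑ h ∈ An x, B h x ^ α) < 1 :=
          (div_lt_one hSx).mpr hlt
        linarith
  rw [key a b hab, key b a hab.symm]
  constructor
  · rintro ⟨⟨⟨j, hj⟩, hab'⟩, ⟨_, hba'⟩⟩
    have hja := (Finset.mem_inter.mp hj).1
    have hjb := (Finset.mem_inter.mp hj).2
    refine ⟨⟨j, ?_, ?_, hja, hjb⟩, hab', hba'⟩
    · rintro rfl; exact hab' hjb
    · rintro rfl; exact hba' hja
  · rintro ⟨⟨j, _, _, hja, hjb⟩, hab', hba'⟩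
    exact ⟨⟨⟨j, Finset.mem_inter.mpr ⟨hja, hjb⟩⟩, hab'⟩,
      ⟨j, Finset.mem_inter.mpr ⟨hjb, hja⟩⟩, hba'⟩
end

section
/- In a heavy-tailed linear SCM, Γ_{12} = 1 together with Γ_{21} ∈ (1/2, 1) implies that X_1 causes X_2, i.e., node 1 is an ancestor of node 2 in G. -/
open Filter Topology

theorem gamma_values_imply_cause
    {V : Type*} [Fintype V] [DecidableEq V]
    -- the ancestor sets of the DAG (`An j` contains `j` itself)
    (An : V → Finset V) (hAself : ∀ j, j ∈ An j)
    (hATrans : ∀ j, ∀ h ∈ An j, An h ⊆ An j)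
    (hAAcyclic : ∀ j h, h ∈ An j → j ∈ An h → h = j)
    -- the path coefficients of the SCM
    (B : V → V → ℝ) (hBpos : ∀ j, ∀ h ∈ An j, 0 < B h j) (hBself : ∀ j, B j j = 1)
    (α : ℝ) (hα : 0 < α)
    -- the matrix of causal tail coefficients, via its closed form
    (Γ : V → V → ℝ)
    (hΓ : ∀ j k, j ≠ k →
      Γ j k = 1 / 2 + 1 / 2 * (∑ h ∈ An j ∩ An k, B h j ^ α) / (∑ h ∈ An j, B h j ^ α))
    -- the two nodes of interest
    (a b : V) (hab : a ≠ b)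
    (h1 : Γ a b = 1) (h2 : Γ b a ∈ Set.Ioo (1 / 2 : ℝ) 1) :
    a ∈ An b := by
  by_contra hnb
  have hSpos : 0 < ∑ h ∈ An a, B h a ^ α := by
    apply Finset.sum_pos
    · intro h hh
      exact Real.rpow_pos_of_pos (hBpos a h hh) α
    · exact ⟨a, hAself a⟩
  have hlt : (∑ h ∈ An a ∩ An b, B h a ^ α) < ∑ h ∈ An a, B h a ^ α := by
    apply Finset.sum_lt_sum_of_subset (Finset.inter_subset_left) (i := a) (hAself a)
    · simp [hnb]
    · exact Real.rpow_pos_of_pos (hBpos a a (hAself a)) α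
    · intro j hj _
      exact le_of_lt (Real.rpow_pos_of_pos (hBpos a j hj) α)
  have := hΓ a b hab
  rw [h1] at this
  have h3 : (1 / 2 * ∑ h ∈ An a ∩ An b, B h a ^ α) / (∑ h ∈ An a, B h a ^ α) = 1 / 2 := by
    linarith
  rw [div_eq_iff (ne_of_gt hSpos)] at h3
  linarith
end

section
/- For any DAG G on vertex set V = {1,...,p} and Γ the matrix of causal tail coefficients of a heavy-tailed linear SCM with DAG G, the EASE algorithm (extremal ancestral search) returns a permutation π that is a causal order of G: for all i, j with i an ancestor of j, π(i) < π(j). -/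
open Filter Topology

variable {p : ℕ}

/-- The score minimized by EASE at a given step: the maximum of the causal tail
coefficients `Γ j i` over the remaining nodes `j ≠ i` (with `⊥` for an empty set). -/
noncomputable def easeScore (Γ : Fin p → Fin p → ℝ) (S : Finset (Fin p)) (i : Fin p) :
    WithBot ℝ :=
  (S.erase i).sup (fun j => (Γ j i : WithBot ℝ))

/-- If `σ s` is the node selected by EASE at step `s`, the set of nodes still
remaining at step `s`. -/
def easeRemaining (σ : Equiv.Perm (Fin p)) (s : Fin p) : Finset (Fin p) :=
  Finset.univ.filter (fun i => s ≤ σ.symm i)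

/-- `σ` records a run of the EASE greedy algorithm on `Γ`: at every step `s`, the node
`σ s` chosen at step `s` minimizes the score among all remaining nodes. -/
def IsEASERun (Γ : Fin p → Fin p → ℝ) (σ : Equiv.Perm (Fin p)) : Prop :=
  ∀ s i, i ∈ easeRemaining σ s →
    easeScore Γ (easeRemaining σ s) (σ s) ≤ easeScore Γ (easeRemaining σ s) i

/-!
A node that still has a strict ancestor among the remaining nodes scores at least `1`, since
`Γ` equals `1` on ancestor pairs; a source of the remaining nodes (which exists because the
ancestor relation is a strict order on a finite set) scores below `1`. Hence the greedy choice
never selects a node while one of its ancestors remains, so every ancestor is selected earlier.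
-/

section EASE

variable {Γ : Fin p → Fin p → ℝ}

theorem coe_le_easeScore {S : Finset (Fin p)} {i k : Fin p} (hk : k ∈ S) (hki : k ≠ i) :
    (Γ k i : WithBot ℝ) ≤ easeScore Γ S i :=
  Finset.le_sup (f := fun j => (Γ j i : WithBot ℝ)) (Finset.mem_erase.mpr ⟨hki, hk⟩)

theorem easeScore_lt {S : Finset (Fin p)} {i : Fin p} {c : ℝ}
    (h : ∀ k ∈ S, k ≠ i → Γ k i < c) : easeScore Γ S i < c :=
  (Finset.sup_lt_iff (WithBot.bot_lt_coe c)).mpr fun k hk =>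
    WithBot.coe_lt_coe.mpr (h k (Finset.mem_of_mem_erase hk) (Finset.ne_of_mem_erase hk))

@[simp]
theorem mem_easeRemaining {σ : Equiv.Perm (Fin p)} {s i : Fin p} :
    i ∈ easeRemaining σ s ↔ s ≤ σ.symm i := by
  simp [easeRemaining]

theorem IsEASERun.not_anc_selected {anc : Fin p → Fin p → Prop}
    (htrans : ∀ i j k, anc i j → anc j k → anc i k) (hirrefl : ∀ i, ¬ anc i i)
    (hΓ : ∀ j i, j ≠ i → (anc j i → Γ j i = 1) ∧ (¬ anc j i → Γ j i < 1))
    {σ : Equiv.Perm (Fin p)} (hrun : IsEASERun Γ σ) (s : Fin p) {k : Fin p}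
    (hk : k ∈ easeRemaining σ s) (hks : k ≠ σ s) : ¬ anc k (σ s) := by
  intro hanc
  have : IsTrans (Fin p) anc := ⟨htrans⟩
  have : Std.Irrefl anc := ⟨hirrefl⟩
  obtain ⟨m, hm, hm_source⟩ := (Finite.wellFounded_of_trans_of_irrefl anc).has_min
    (easeRemaining σ s : Set (Fin p)) ⟨k, hk⟩
  have hscore_m : easeScore Γ (easeRemaining σ s) m < (1 : ℝ) :=
    easeScore_lt fun l hl hlm => (hΓ l m hlm).2 (hm_source l hl)
  have hscore_s : ((1 : ℝ) : WithBot ℝ) ≤ easeScore Γ (easeRemaining σ s) (σ s) := by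
    rw [← (hΓ k (σ s) hks).1 hanc]
    exact coe_le_easeScore hk hks
  exact (hscore_s.trans (hrun s m hm)).not_gt hscore_m

end EASE

theorem ease_returns_causal_order
    -- the strict ancestor relation of the DAG on nodes {1,...,p}
    (anc : Fin p → Fin p → Prop)
    (htrans : ∀ i j k, anc i j → anc j k → anc i k)
    (hirrefl : ∀ i, ¬ anc i i)
    -- the matrix of causal tail coefficients of a heavy-tailed linear SCM with this DAG
    (Γ : Fin p → Fin p → ℝ)
    (hΓ : ∀ j i, j ≠ i → (anc j i → Γ j i = 1) ∧ (¬ anc j i → Γ j i < 1))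
    -- a run of the EASE algorithm, returning the permutation σ.symm
    (σ : Equiv.Perm (Fin p)) (hrun : IsEASERun Γ σ) :
    ∀ i j, anc i j → σ.symm i < σ.symm j := by
  intro i j hij
  by_contra! hji
  have hi : i ∈ easeRemaining σ (σ.symm j) := mem_easeRemaining.mpr hji
  have hij_ne : i ≠ j := by
    rintro rfl
    exact hirrefl i hij
  have hno_anc := hrun.not_anc_selected htrans hirrefl hΓ (σ.symm j) hi
  rw [Equiv.apply_symm_apply] at hno_anc
  exact hno_anc hij_ne hij
end

section
/- For a DAG G on p nodes, an abstract formulation of EASE correctness: let Γ ∈ ℝ^{p×p} satisfy Γ_{ji} = 1 iff j ∈ an(i, G) and Γ_{ji} < 1 otherwise (j ≠ i). Then at every step s of the greedy procedure that removes a minimizer of i ↦ max_{j ∈ V_s, j≠i} Γ_{ji}, the chosen node i_s satisfies an(i_s, G) ⊆ {i_1, ..., i_{s-1}}. -/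
open Filter Topology

variable {p : ℕ}

theorem ease_step_chooses_exhausted_ancestors
    -- the strict ancestor relation of the DAG on nodes {1,...,p}
    (anc : Fin p → Fin p → Prop)
    (htrans : ∀ i j k, anc i j → anc j k → anc i k)
    (hirrefl : ∀ i, ¬ anc i i)
    (Γ : Fin p → Fin p → ℝ)
    (hΓ : ∀ j i, j ≠ i → (anc j i → Γ j i = 1) ∧ (¬ anc j i → Γ j i < 1))
    -- a run of the greedy procedure, choosing node σ s at step s
    (σ : Equiv.Perm (Fin p)) (hrun : IsEASERun Γ σ) :
    -- at every step s, all strict ancestors of the chosen node were already chosen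
    ∀ s : Fin p, ∀ h, anc h (σ s) → σ.symm h < s := by
  intro s h hanc
  by_contra hlt
  push_neg at hlt
  set S := easeRemaining σ s with hS
  have hhS : h ∈ S := by
    simp [hS, easeRemaining, hlt]
  have hσS : σ s ∈ S := by
    simp [hS, easeRemaining]
  -- find an anc-minimal element of S
  haveI : IsTrans (Fin p) anc := ⟨htrans⟩
  haveI : IsIrrefl (Fin p) anc := ⟨hirrefl⟩
  have wf : WellFounded anc := Finite.wellFounded_of_trans_of_irrefl anc
  obtain ⟨m, hmS, hmin⟩ := wf.has_min (↑S : Set (Fin p)) ⟨σ s, hσS⟩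
  have hmS' : m ∈ S := hmS
  -- score of m is < 1
  have hscm : easeScore Γ S m < (1 : ℝ) := by
    unfold easeScore
    rw [Finset.sup_lt_iff (by exact bot_lt_iff_ne_bot.mpr (by simp))]
    intro j hj
    rw [Finset.mem_erase] at hj
    have : ¬ anc j m := hmin j hj.2
    exact_mod_cast ((hΓ j m hj.1).2 this)
  -- score of σ s is ≥ 1
  have hne : h ≠ σ s := by
    intro he; exact hirrefl (σ s) (he ▸ hanc)
  have h1 : (Γ h (σ s) : WithBot ℝ) ≤ easeScore Γ S (σ s) :=
    Finset.le_sup (f := fun j => (Γ j (σ s) : WithBot ℝ)) (Finset.mem_erase.mpr ⟨hne, hhS⟩)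
  have hΓ1 : Γ h (σ s) = 1 := (hΓ h (σ s) hne).1 hanc
  have hge : (1 : WithBot ℝ) ≤ easeScore Γ S (σ s) := by
    calc (1 : WithBot ℝ) = (Γ h (σ s) : WithBot ℝ) := by rw [hΓ1]; norm_num
      _ ≤ _ := h1
  have := hrun s m hmS'
  rw [← hS] at this
  exact absurd (lt_of_le_of_lt (hge.trans this) hscm) (lt_irrefl _)
end
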